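/- arXiv:1403.2433 — 3 statements merged into one kernel-verified Lean document; each statement's English description precedes it below -/
import Mathlib

section
/- Let Θ be a finite nonempty set and Φ : Δ_Θ → ℝ a differentiable entropy. Then for every μ in the relative interior of Δ_Θ and every v ∈ ℝ^Θ: Φ*(∇Φ(μ)) − Φ*(∇Φ(μ) − v) = inf_{μ' ∈ Δ_Θ} [⟨μ', v⟩ + D_Φ(μ', μ)]. -/
open Finset

/-- The probability simplex over a finite set `Θ`. -/
def probSimplex (Θ : Type*) [Fintype Θ] : Set (Θ → ℝ) :=
  {μ | (∀ θ, 0 ≤ μ θ) ∧ ∑ θ, μ θ = 1}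

/-- The relative interior of the probability simplex. -/
def probSimplexRI (Θ : Type*) [Fintype Θ] : Set (Θ → ℝ) :=
  {μ | (∀ θ, 0 < μ θ) ∧ ∑ θ, μ θ = 1}

/-- Standard inner product on `ℝ^Θ`. -/
noncomputable def ip {Θ : Type*} [Fintype Θ] (v w : Θ → ℝ) : ℝ := ∑ θ, v θ * w θ

/-- Convex conjugate of a function on the probability simplex:
`Φ*(v) = sup_{μ ∈ Δ_Θ} ⟨μ, v⟩ − Φ(μ)`. -/
noncomputable def conjF {Θ : Type*} [Fintype Θ] (Φ : (Θ → ℝ) → ℝ) (v : Θ → ℝ) : ℝ :=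
  sSup ((fun μ => ip μ v - Φ μ) '' probSimplex Θ)

/-- The continuous linear functional `w ↦ ⟨g, w⟩` associated with a vector `g : Θ → ℝ`;
used to express that `g` is a gradient. -/
noncomputable def toCLM {Θ : Type*} [Fintype Θ] (g : Θ → ℝ) : (Θ → ℝ) →L[ℝ] ℝ :=
  ∑ θ, g θ • (ContinuousLinearMap.proj θ : (Θ → ℝ) →L[ℝ] ℝ)

/-- Bregman divergence `D_Φ(μ', μ) = Φ(μ') − Φ(μ) − ⟨∇Φ(μ), μ' − μ⟩`, where the
gradient of `Φ` is given by `g`. -/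
noncomputable def bregDiv {Θ : Type*} [Fintype Θ] (Φ : (Θ → ℝ) → ℝ)
    (g : (Θ → ℝ) → Θ → ℝ) (μ' μ : Θ → ℝ) : ℝ :=
  Φ μ' - Φ μ - ip (g μ) (fun θ => μ' θ - μ θ)

/-- The proper loss `λ^Φ(μ) = Φ*(∇Φ(μ))·𝟏 − ∇Φ(μ)` associated with entropy `Φ`
with gradient `g`. -/
noncomputable def lamLoss {Θ : Type*} [Fintype Θ] (Φ : (Θ → ℝ) → ℝ)
    (g : (Θ → ℝ) → Θ → ℝ) (μ : Θ → ℝ) : Θ → ℝ :=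
  fun θ => conjF Φ (g μ) - g μ θ

/-- Negative Shannon entropy `(−H)(μ) = ∑ θ, μ(θ) log μ(θ)` (with `0 log 0 = 0`,
since `Real.log 0 = 0`). -/
noncomputable def negH {Θ : Type*} [Fintype Θ] (μ : Θ → ℝ) : ℝ :=
  ∑ θ, μ θ * Real.log (μ θ)

/-! The gradient inequality `⟨∇Φ(μ), μ' − μ⟩ ≤ Φ(μ') − Φ(μ)` says that `μ` maximises
`μ' ↦ ⟨μ', ∇Φ(μ)⟩ − Φ(μ')` over the simplex, so `Φ*(∇Φ(μ)) = ⟨μ, ∇Φ(μ)⟩ − Φ(μ) =: c`. Each term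
of the infimum is then `c − (⟨μ', ∇Φ(μ) − v⟩ − Φ(μ'))`, and the infimum of `c − x` over a set
bounded above is `c` minus its supremum, here `c − Φ*(∇Φ(μ) − v)`. -/

theorem ConvexOn.apply_sub_le_of_hasFDerivWithinAt {E : Type*} [NormedAddCommGroup E]
    [NormedSpace ℝ E] {s : Set E} {f : E → ℝ} {f' : E →L[ℝ] ℝ} {x y : E}
    (hf : ConvexOn ℝ s f) (hx : x ∈ s) (hy : y ∈ s) (hf' : HasFDerivWithinAt f f' s x) :
    f' (y - x) ≤ f y - f x := by
  have hmaps : Set.MapsTo (AffineMap.lineMap x y) (Set.Icc (0 : ℝ) 1) s :=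
    fun _ ht ↦ hf.1.lineMap_mem hx hy ht
  have hline : ConvexOn ℝ (Set.Icc (0 : ℝ) 1) (f ∘ AffineMap.lineMap x y) :=
    (hf.comp_affineMap _).subset hmaps (convex_Icc 0 1)
  have hderiv : HasDerivWithinAt (f ∘ AffineMap.lineMap x y) (f' (y - x)) (Set.Icc 0 1)
      (0 : ℝ) := by
    have hf'0 : HasFDerivWithinAt f f' s (AffineMap.lineMap x y (0 : ℝ)) := by simpa using hf'
    exact hf'0.comp_hasDerivWithinAt 0 AffineMap.hasDerivWithinAt_lineMap hmaps
  simpa [slope_def_field] using hline.le_slope_of_hasDerivWithinAt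
    (Set.left_mem_Icc.2 zero_le_one) (Set.right_mem_Icc.2 zero_le_one) zero_lt_one hderiv

theorem Real.sInf_image_const_sub {s : Set ℝ} (c : ℝ) (hs : s.Nonempty) (hbdd : BddAbove s) :
    sInf ((c - ·) '' s) = c - sSup s :=
  (Antitone.map_csSup_of_continuousAt (continuous_sub_left c).continuousAt
    (fun _ _ h ↦ sub_le_sub_left h c) hs hbdd).symm

section Simplex

variable {Θ : Type*} [Fintype Θ]

theorem ip_comm (v w : Θ → ℝ) : ip v w = ip w v := by
  simp only [ip, mul_comm]

theorem ip_sub_right (u v w : Θ → ℝ) : ip u (v - w) = ip u v - ip u w := by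
  simp only [ip, Pi.sub_apply, mul_sub, sum_sub_distrib]

theorem toCLM_apply (g w : Θ → ℝ) : toCLM g w = ip g w := by
  simp [toCLM, ip]

theorem probSimplexRI_subset_probSimplex : probSimplexRI Θ ⊆ probSimplex Θ :=
  fun _ hμ ↦ ⟨fun θ ↦ (hμ.1 θ).le, hμ.2⟩

theorem abs_ip_le_of_mem_probSimplex {μ : Θ → ℝ} (hμ : μ ∈ probSimplex Θ) (v : Θ → ℝ) :
    |ip μ v| ≤ ∑ θ, |v θ| := by
  refine (abs_sum_le_sum_abs _ _).trans (sum_le_sum fun θ _ ↦ ?_)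
  rw [abs_mul, abs_of_nonneg (hμ.1 θ)]
  have hle : μ θ ≤ 1 := hμ.2 ▸ single_le_sum (fun θ _ ↦ hμ.1 θ) (mem_univ θ)
  exact mul_le_of_le_one_left (abs_nonneg _) hle

theorem bddAbove_ip_sub_sub {Φ : (Θ → ℝ) → ℝ} {g : Θ → ℝ}
    (h : BddAbove ((fun μ' ↦ ip μ' g - Φ μ') '' probSimplex Θ)) (v : Θ → ℝ) :
    BddAbove ((fun μ' ↦ ip μ' (g - v) - Φ μ') '' probSimplex Θ) := by
  obtain ⟨c, hc⟩ := h
  refine ⟨c + ∑ θ, |v θ|, ?_⟩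
  rintro _ ⟨μ', hμ', rfl⟩
  have hle := hc ⟨μ', hμ', rfl⟩
  have hv := neg_le_of_abs_le (abs_ip_le_of_mem_probSimplex hμ' v)
  simp only [ip_sub_right] at hle ⊢
  linarith

theorem isGreatest_ip_sub_of_hasFDerivWithinAt {Φ : (Θ → ℝ) → ℝ} {g μ : Θ → ℝ}
    (hconv : ConvexOn ℝ (probSimplex Θ) Φ) (hμ : μ ∈ probSimplex Θ)
    (hg : HasFDerivWithinAt Φ (toCLM g) (probSimplex Θ) μ) :
    IsGreatest ((fun μ' ↦ ip μ' g - Φ μ') '' probSimplex Θ) (ip μ g - Φ μ) := by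
  refine ⟨⟨μ, hμ, rfl⟩, ?_⟩
  rintro _ ⟨μ', hμ', rfl⟩
  have hgrad := hconv.apply_sub_le_of_hasFDerivWithinAt hμ hμ' hg
  rw [toCLM_apply, ip_sub_right, ip_comm g, ip_comm g] at hgrad
  simp only
  linarith

end Simplex

theorem conjF_sub_conjF_eq_inf_general {Θ : Type*} [Fintype Θ]
    (Φ : (Θ → ℝ) → ℝ) (gradΦ : (Θ → ℝ) → Θ → ℝ)
    (hconv : ConvexOn ℝ (probSimplex Θ) Φ)
    (hdiff : ∀ μ ∈ probSimplexRI Θ,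
      HasFDerivWithinAt Φ (toCLM (gradΦ μ)) (probSimplex Θ) μ)
    (μ : Θ → ℝ) (hμ : μ ∈ probSimplexRI Θ) (v : Θ → ℝ) :
    conjF Φ (gradΦ μ) - conjF Φ (gradΦ μ - v)
      = sInf ((fun μ' => ip μ' v + bregDiv Φ gradΦ μ' μ) '' probSimplex Θ) := by
  have hμΔ := probSimplexRI_subset_probSimplex hμ
  have hmax := isGreatest_ip_sub_of_hasFDerivWithinAt hconv hμΔ (hdiff μ hμ)
  set c := ip μ (gradΦ μ) - Φ μ
  have hterm : ∀ μ', ip μ' v + bregDiv Φ gradΦ μ' μ = c - (ip μ' (gradΦ μ - v) - Φ μ') := by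
    intro μ'
    have hsub : ip (gradΦ μ) (fun θ ↦ μ' θ - μ θ) = ip μ' (gradΦ μ) - ip μ (gradΦ μ) := by
      rw [← Pi.sub_def, ip_sub_right, ip_comm, ip_comm (gradΦ μ)]
    rw [bregDiv, hsub, ip_sub_right]
    ring
  rw [Set.image_congr fun μ' _ ↦ hterm μ', ← Set.image_image (c - ·),
    Real.sInf_image_const_sub c ((Set.nonempty_of_mem hμΔ).image _)
      (bddAbove_ip_sub_sub hmax.bddAbove v), conjF, hmax.csSup_eq]
  rfl

/-- Lemma 1 of the paper: For a differentiable entropy `Φ`,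
`Φ*(∇Φ(μ)) − Φ*(∇Φ(μ) − v) = inf_{μ' ∈ Δ_Θ} ⟨μ', v⟩ + D_Φ(μ', μ)`. -/
theorem conjF_sub_conjF_eq_inf {Θ : Type*} [Fintype Θ] [Nonempty Θ]
    (Φ : (Θ → ℝ) → ℝ) (gradΦ : (Θ → ℝ) → Θ → ℝ)
    (hconv : ConvexOn ℝ (probSimplex Θ) Φ)
    (hlsc : LowerSemicontinuousOn Φ (probSimplex Θ))
    (hdiff : ∀ μ ∈ probSimplexRI Θ,
      HasFDerivWithinAt Φ (toCLM (gradΦ μ)) (probSimplex Θ) μ)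
    (μ : Θ → ℝ) (hμ : μ ∈ probSimplexRI Θ) (v : Θ → ℝ) :
    conjF Φ (gradΦ μ) - conjF Φ (gradΦ μ - v)
      = sInf ((fun μ' => ip μ' v + bregDiv Φ gradΦ μ' μ) '' probSimplex Θ) :=
  conjF_sub_conjF_eq_inf_general Φ gradΦ hconv hdiff μ hμ v
end

section
/- Let Θ be a finite nonempty set, η > 0, and Φ = (1/η)(−H) where H is Shannon entropy, with λ^Φ(μ) := Φ*(∇Φ(μ))·𝟏 − ∇Φ(μ). Then for every μ in the relative interior of Δ_Θ and every a ∈ ℝ^Θ: −Φ*(−λ^Φ(μ) − a) = −(1/η) log Σ_{θ∈Θ} exp(−η·a(θ))·μ(θ). In particular, a real number c satisfies c ≤ −Φ*(−λ^Φ(μ) − a) if and only if c ≤ −(1/η) log Σ_θ exp(−η·a(θ))·μ(θ), so Φ-mixability for this Φ coincides with Vovk's η-mixability condition. -/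
open Finset

/-! For `η = 1` the conjugate of negative entropy on the simplex is log-sum-exp, the supremum being
attained at the Gibbs distribution `μ θ ∝ exp (v θ)` (Gibbs' variational principle); scaling gives
`Φ*(v) = (1/η) log ∑ exp (η v)`. At `v = ∇Φ(μ)` this is `1/η`, so `-λ^Φ(μ) - a` has coordinates
`(1/η) log μ(θ) - a(θ)`, and the conjugate there is Vovk's mixing expression. -/

lemma mul_log_sub_mul_log_le_sub {p q : ℝ} (hp : 0 ≤ p) (hq : 0 < q) :
    p * Real.log q - p * Real.log p ≤ q - p := by
  rcases hp.eq_or_lt with rfl | hp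
  · simpa using hq.le
  calc p * Real.log q - p * Real.log p = p * Real.log (q / p) := by
        rw [Real.log_div hq.ne' hp.ne']; ring
    _ ≤ p * (q / p - 1) := by gcongr; exact Real.log_le_sub_one_of_pos (div_pos hq hp)
    _ = q - p := by field_simp

section Gibbs

variable {Θ : Type*} [Fintype Θ]

lemma sum_exp_pos [Nonempty Θ] (x : Θ → ℝ) : 0 < ∑ θ, Real.exp (x θ) :=
  sum_pos (fun θ _ => Real.exp_pos (x θ)) univ_nonempty

lemma ip_sub_negH_le_log_sum_exp [Nonempty Θ] {μ : Θ → ℝ} (hμ : μ ∈ probSimplex Θ)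
    (x : Θ → ℝ) : ip μ x - negH μ ≤ Real.log (∑ θ, Real.exp (x θ)) := by
  obtain ⟨hμ0, hμ1⟩ := hμ
  set Z := ∑ θ, Real.exp (x θ)
  have hZ : 0 < Z := sum_exp_pos x
  have hlog (θ : Θ) : Real.log (Real.exp (x θ) / Z) = x θ - Real.log Z := by
    rw [Real.log_div (Real.exp_ne_zero _) hZ.ne', Real.log_exp]
  have hgibbs : ∑ θ, (μ θ * Real.log (Real.exp (x θ) / Z) - μ θ * Real.log (μ θ))
      ≤ ∑ θ, (Real.exp (x θ) / Z - μ θ) :=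
    sum_le_sum fun θ _ => mul_log_sub_mul_log_le_sub (hμ0 θ) (by positivity)
  simp only [hlog, mul_sub, sum_sub_distrib, ← sum_mul, hμ1, ← sum_div] at hgibbs
  rw [div_self hZ.ne'] at hgibbs
  simp only [ip, negH]
  linarith

lemma ip_sub_negH_gibbs [Nonempty Θ] (x : Θ → ℝ) :
    ip (fun θ => Real.exp (x θ) / ∑ θ', Real.exp (x θ')) x
        - negH (fun θ => Real.exp (x θ) / ∑ θ', Real.exp (x θ'))
      = Real.log (∑ θ, Real.exp (x θ)) := by
  set Z := ∑ θ, Real.exp (x θ)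
  have hZ : 0 < Z := sum_exp_pos x
  simp only [ip, negH, ← sum_sub_distrib, Real.log_div (Real.exp_ne_zero _) hZ.ne',
    Real.log_exp, ← mul_sub, sub_sub_cancel, ← sum_mul, ← sum_div]
  rw [div_self hZ.ne', one_mul]

lemma isGreatest_ip_sub_negH [Nonempty Θ] (x : Θ → ℝ) :
    IsGreatest ((fun μ => ip μ x - negH μ) '' probSimplex Θ)
      (Real.log (∑ θ, Real.exp (x θ))) := by
  refine ⟨⟨_, ⟨fun θ => ?_, ?_⟩, ip_sub_negH_gibbs x⟩, ?_⟩
  · exact div_nonneg (Real.exp_pos _).le (sum_exp_pos x).le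
  · rw [← sum_div, div_self (sum_exp_pos x).ne']
  · rintro _ ⟨μ, hμ, rfl⟩
    exact ip_sub_negH_le_log_sum_exp hμ x

lemma conjF_const_mul_negH [Nonempty Θ] {η : ℝ} (hη : 0 < η) (v : Θ → ℝ) :
    conjF (fun ν => (1 / η) * negH ν) v = (1 / η) * Real.log (∑ θ, Real.exp (η * v θ)) := by
  have hscale : (fun μ => ip μ v - (1 / η) * negH μ) '' probSimplex Θ
      = (fun t => (1 / η) * t) ''
          ((fun μ => ip μ (fun θ => η * v θ) - negH μ) '' probSimplex Θ) := by
    rw [Set.image_image]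
    refine Set.image_congr fun μ _ => ?_
    simp only [ip, mul_sub, mul_sum]
    field_simp
  rw [conjF, hscale]
  exact ((monotone_mul_left_of_nonneg (by positivity)).map_isGreatest
    (isGreatest_ip_sub_negH _)).csSup_eq

lemma conjF_const_mul_negH_gradient [Nonempty Θ] {η : ℝ} (hη : 0 < η) {μ : Θ → ℝ}
    (hμ : μ ∈ probSimplexRI Θ) :
    conjF (fun ν => (1 / η) * negH ν) (fun θ => (1 / η) * (Real.log (μ θ) + 1)) = 1 / η := by
  have hexp (θ : Θ) : Real.exp (η * ((1 / η) * (Real.log (μ θ) + 1))) = μ θ * Real.exp 1 := by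
    rw [← mul_assoc, mul_one_div_cancel hη.ne', one_mul, Real.exp_add, Real.exp_log (hμ.1 θ)]
  simp only [conjF_const_mul_negH hη, hexp, ← sum_mul, hμ.2, one_mul, Real.log_exp, mul_one]

lemma lamLoss_const_mul_negH [Nonempty Θ] {η : ℝ} (hη : 0 < η) {μ : Θ → ℝ}
    (hμ : μ ∈ probSimplexRI Θ) :
    lamLoss (fun ν => (1 / η) * negH ν) (fun ν θ => (1 / η) * (Real.log (ν θ) + 1)) μ
      = fun θ => -(1 / η) * Real.log (μ θ) := by
  ext θ
  rw [lamLoss, conjF_const_mul_negH_gradient hη hμ]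
  ring

end Gibbs

/-- for `Φ = (1/η)(−H)` with gradient `[∇Φ(μ)]_θ = (1/η)(log μ(θ)+1)`,
`−Φ*(−λ^Φ(μ) − a) = −(1/η) log ∑_θ exp(−η a(θ)) μ(θ)`, so `Φ`-mixability for this `Φ`
coincides with Vovk's `η`-mixability condition. -/
theorem mixability_shannon_eq_vovk {Θ : Type*} [Fintype Θ] [Nonempty Θ]
    (η : ℝ) (hη : 0 < η)
    (μ : Θ → ℝ) (hμ : μ ∈ probSimplexRI Θ) (a : Θ → ℝ) :
    (-conjF (fun ν => (1 / η) * negH ν)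
          (-(lamLoss (fun ν => (1 / η) * negH ν)
              (fun ν θ' => (1 / η) * (Real.log (ν θ') + 1)) μ) - a)
        = -(1 / η) * Real.log (∑ θ, Real.exp (-η * a θ) * μ θ)) ∧
      ∀ c : ℝ,
        (c ≤ -conjF (fun ν => (1 / η) * negH ν)
            (-(lamLoss (fun ν => (1 / η) * negH ν)
                (fun ν θ' => (1 / η) * (Real.log (ν θ') + 1)) μ) - a)
          ↔ c ≤ -(1 / η) * Real.log (∑ θ, Real.exp (-η * a θ) * μ θ)) := by
  have hexp (θ : Θ) : Real.exp (η * (-(-(1 / η) * Real.log (μ θ)) - a θ))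
      = Real.exp (-η * a θ) * μ θ := by
    rw [show η * (-(-(1 / η) * Real.log (μ θ)) - a θ) = -η * a θ + Real.log (μ θ) by
      field_simp; ring, Real.exp_add, Real.exp_log (hμ.1 θ)]
  have hconj : conjF (fun ν => (1 / η) * negH ν)
      (-(lamLoss (fun ν => (1 / η) * negH ν)
          (fun ν θ' => (1 / η) * (Real.log (ν θ') + 1)) μ) - a)
      = (1 / η) * Real.log (∑ θ, Real.exp (-η * a θ) * μ θ) := by
    simp only [conjF_const_mul_negH hη, lamLoss_const_mul_negH hη hμ, Pi.sub_apply,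
      Pi.neg_apply, hexp]
  rw [hconj, neg_mul]
  exact ⟨rfl, fun c => Iff.rfl⟩
end

section
/- (Strengthened main bound.) Under the hypotheses of the main theorem (Θ finite nonempty, Φ a differentiable entropy with differentiable conjugate satisfying ∇Φ(∇Φ*(v)) − v ∈ ℝ·𝟏, translation invariance of ∇Φ*, and Fenchel–Young equality on the relative interior; ℓ : Δ_X → ℝ^X Φ-mixable; π in the relative interior of Δ_Θ; μ⁰ := π, μ^t := ∇Φ*(∇Φ(μ^{t−1}) − α^t) where α^t(θ) := ℓ_{x^t}(p^t_θ); and p^t satisfies ℓ_{x^t}(p^t) ≤ −Φ*(−λ^Φ(μ^{t−1}) − α^t) for each t), the generalised aggregating algorithm satisfies, for every μ' ∈ Δ_Θ: Σ_{t=1}^T ℓ_{x^t}(p^t) ≤ ⟨μ', Σ_{t=1}^T α^t⟩ + D_Φ(μ', π). -/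
open Finset

/-! Lower semicontinuity on the compact simplex bounds `Φ` below, so the supremum defining `Φ*`
is finite (not the junk value of `sSup`) and `Φ*(v + c𝟏) = Φ*(v) + c`. The Fenchel–Young gap
`Φ(μ') + Φ*(v) − ⟨μ', v⟩` is then nonnegative, and at `v = ∇Φ(π)` it is `D_Φ(μ', π)` by the
Fenchel–Young equality. Because `∇Φ(μ^{t+1}) = ∇Φ(μ^t) − α^t + c𝟏`, the translation rule turns the
mixability bound of round `t` into `⟨μ', α^t⟩` plus the drop of the gap at `∇Φ(μ^t)` from `t` to
`t + 1`, and the sum over the rounds telescopes. -/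

section Simplex

variable {Θ : Type*} [Fintype Θ]

theorem isCompact_probSimplex : IsCompact (probSimplex Θ) :=
  isCompact_stdSimplex ℝ Θ

theorem ip_add_smul_one {μ : Θ → ℝ} (hμ : μ ∈ probSimplex Θ) (v : Θ → ℝ) (c : ℝ) :
    ip μ (v + c • 1) = ip μ v + c := by
  change μ ⬝ᵥ (v + c • 1) = μ ⬝ᵥ v + c
  rw [dotProduct_add, dotProduct_smul, dotProduct_one, hμ.2, smul_eq_mul, mul_one]

theorem sum_ip {ι : Type*} (s : Finset ι) (μ : Θ → ℝ) (v : ι → Θ → ℝ) :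
    ∑ i ∈ s, ip μ (v i) = ip μ (fun θ => ∑ i ∈ s, v i θ) := by
  change ∑ i ∈ s, μ ⬝ᵥ v i = μ ⬝ᵥ fun θ => ∑ i ∈ s, v i θ
  rw [← dotProduct_sum]
  congr 1
  ext θ
  exact Finset.sum_apply θ s v

end Simplex

section Conjugate

variable {Θ : Type*} [Fintype Θ] {Φ : (Θ → ℝ) → ℝ}

theorem bddAbove_conjF_image (hΦ : BddBelow (Φ '' probSimplex Θ)) (v : Θ → ℝ) :
    BddAbove ((fun μ => ip μ v - Φ μ) '' probSimplex Θ) := by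
  obtain ⟨m, hm⟩ := hΦ
  obtain ⟨M, hM⟩ := isCompact_probSimplex.bddAbove_image
    (f := fun μ : Θ → ℝ => ip μ v) (by unfold ip; fun_prop)
  refine ⟨M - m, ?_⟩
  rintro _ ⟨μ, hμ, rfl⟩
  linarith [hm ⟨μ, hμ, rfl⟩, hM ⟨μ, hμ, rfl⟩]

theorem ip_sub_le_conjF (hΦ : BddBelow (Φ '' probSimplex Θ)) (v : Θ → ℝ)
    {μ : Θ → ℝ} (hμ : μ ∈ probSimplex Θ) : ip μ v - Φ μ ≤ conjF Φ v :=
  le_csSup (bddAbove_conjF_image hΦ v) ⟨μ, hμ, rfl⟩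

theorem conjF_add_smul_one (hne : (probSimplex Θ).Nonempty)
    (hΦ : BddBelow (Φ '' probSimplex Θ)) (v : Θ → ℝ) (c : ℝ) :
    conjF Φ (v + c • 1) = conjF Φ v + c := by
  have himage : (fun μ => ip μ (v + c • 1) - Φ μ) '' probSimplex Θ
      = (· + c) '' ((fun μ => ip μ v - Φ μ) '' probSimplex Θ) := by
    rw [Set.image_image]
    refine Set.image_congr fun μ hμ => ?_
    rw [ip_add_smul_one hμ]
    ring
  rw [conjF, himage, conjF]
  exact ((OrderIso.addRight c).map_csSup' (hne.image _) (bddAbove_conjF_image hΦ v)).symm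

end Conjugate

section FenchelYoungGap

variable {Θ : Type*} [Fintype Θ] {Φ : (Θ → ℝ) → ℝ}

noncomputable def fenchelYoungGap (Φ : (Θ → ℝ) → ℝ) (μ' v : Θ → ℝ) : ℝ :=
  Φ μ' + conjF Φ v - ip μ' v

theorem fenchelYoungGap_nonneg (hΦ : BddBelow (Φ '' probSimplex Θ)) {μ' : Θ → ℝ}
    (hμ' : μ' ∈ probSimplex Θ) (v : Θ → ℝ) : 0 ≤ fenchelYoungGap Φ μ' v := by
  unfold fenchelYoungGap
  linarith [ip_sub_le_conjF hΦ v hμ']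

theorem fenchelYoungGap_eq_bregDiv {g : (Θ → ℝ) → Θ → ℝ} {π : Θ → ℝ}
    (hπ : conjF Φ (g π) = ip π (g π) - Φ π) (μ' : Θ → ℝ) :
    fenchelYoungGap Φ μ' (g π) = bregDiv Φ g μ' π := by
  simp only [fenchelYoungGap, bregDiv, hπ, ip, mul_sub, Finset.sum_sub_distrib]
  simp only [mul_comm (g π _)]
  ring

theorem neg_conjF_neg_lamLoss_sub_eq (hne : (probSimplex Θ).Nonempty)
    (hΦ : BddBelow (Φ '' probSimplex Θ)) {μ' : Θ → ℝ} (hμ' : μ' ∈ probSimplex Θ)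
    {g : (Θ → ℝ) → Θ → ℝ} {μ a w : Θ → ℝ} {c : ℝ} (hw : w = g μ - a + c • 1) :
    -conjF Φ (fun θ => -lamLoss Φ g μ θ - a θ)
      = ip μ' a + fenchelYoungGap Φ μ' (g μ) - fenchelYoungGap Φ μ' w := by
  have hmix : (fun θ => -lamLoss Φ g μ θ - a θ) = g μ - a + (-conjF Φ (g μ)) • 1 := by
    ext θ
    simp only [lamLoss, Pi.add_apply, Pi.sub_apply, Pi.smul_apply, Pi.one_apply, smul_eq_mul]
    ring
  have hip : ip μ' w = ip μ' (g μ) - ip μ' a + c := by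
    rw [hw, ip_add_smul_one hμ']
    change μ' ⬝ᵥ (g μ - a) + c = _
    rw [dotProduct_sub]
    rfl
  rw [fenchelYoungGap, fenchelYoungGap, hip, hmix, hw, conjF_add_smul_one hne hΦ,
    conjF_add_smul_one hne hΦ]
  ring

end FenchelYoungGap

theorem generalised_aggregating_algorithm_strong_bound_general
    {Θ : Type*} [Fintype Θ] {X P : Type*}
    (ℓ : P → X → ℝ)
    (Φ : (Θ → ℝ) → ℝ) (gradΦ gradConj : (Θ → ℝ) → Θ → ℝ)
    (hlsc : LowerSemicontinuousOn Φ (probSimplex Θ))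
    (hinv₂ : ∀ v : Θ → ℝ, ∃ c : ℝ, gradΦ (gradConj v) = v + c • (1 : Θ → ℝ))
    (hFY : ∀ μ ∈ probSimplexRI Θ, conjF Φ (gradΦ μ) = ip μ (gradΦ μ) - Φ μ)
    -- the game: prior, observations, expert predictions
    (π : Θ → ℝ) (hπ : π ∈ probSimplexRI Θ)
    (T : ℕ) (x : ℕ → X) (p : ℕ → Θ → P)
    -- the GAA mixture updates `μ^t = ∇Φ*(∇Φ(μ^{t−1}) − α^t)` with `α^t(θ) = ℓ_{x^t}(p^t_θ)`
    (μ : ℕ → Θ → ℝ) (h0 : μ 0 = π)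
    (hrec : ∀ t < T, μ (t + 1) = gradConj (gradΦ (μ t) - fun θ => ℓ (p t θ) (x t)))
    -- the GAA predictions, satisfying the mixability inequality each round
    (q : ℕ → P)
    (hq : ∀ t < T,
      ℓ (q t) (x t) ≤ -conjF Φ (fun θ => -lamLoss Φ gradΦ (μ t) θ - ℓ (p t θ) (x t))) :
    ∀ μ' ∈ probSimplex Θ,
      ∑ t ∈ Finset.range T, ℓ (q t) (x t)
        ≤ ip μ' (fun θ => ∑ t ∈ Finset.range T, ℓ (p t θ) (x t))
          + bregDiv Φ gradΦ μ' π := by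
  intro μ' hμ'
  have hne : (probSimplex Θ).Nonempty := ⟨π, probSimplexRI_subset_probSimplex hπ⟩
  have hΦ := hlsc.bddBelow_of_isCompact isCompact_probSimplex
  set gap := fun t => fenchelYoungGap Φ μ' (gradΦ (μ t))
  have hround : ∀ t < T,
      ℓ (q t) (x t) ≤ ip μ' (fun θ => ℓ (p t θ) (x t)) + (gap t - gap (t + 1)) := by
    intro t ht
    obtain ⟨c, hc⟩ := hinv₂ (gradΦ (μ t) - fun θ => ℓ (p t θ) (x t))
    rw [← hrec t ht] at hc
    have hmix := neg_conjF_neg_lamLoss_sub_eq hne hΦ hμ' hc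
    linarith [hq t ht]
  calc ∑ t ∈ Finset.range T, ℓ (q t) (x t)
      ≤ ∑ t ∈ Finset.range T, (ip μ' (fun θ => ℓ (p t θ) (x t)) + (gap t - gap (t + 1))) :=
        Finset.sum_le_sum fun t ht => hround t (Finset.mem_range.mp ht)
    _ = ip μ' (fun θ => ∑ t ∈ Finset.range T, ℓ (p t θ) (x t)) + (gap 0 - gap T) := by
        rw [Finset.sum_add_distrib, Finset.sum_range_sub', sum_ip]
    _ ≤ ip μ' (fun θ => ∑ t ∈ Finset.range T, ℓ (p t θ) (x t)) + bregDiv Φ gradΦ μ' π := by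
        have hgap0 : gap 0 = bregDiv Φ gradΦ μ' π := by
          simp only [gap, h0]
          exact fenchelYoungGap_eq_bregDiv (hFY π hπ) μ'
        linarith [fenchelYoungGap_nonneg hΦ hμ' (gradΦ (μ T))]

/-- strengthened main bound, eq. (14) of the paper: under the
hypotheses of the main theorem, the generalised aggregating algorithm satisfies
`∑_t ℓ_{x^t}(p^t) ≤ ⟨μ', ∑_t α^t⟩ + D_Φ(μ', π)` for every `μ' ∈ Δ_Θ`. -/
theorem generalised_aggregating_algorithm_strong_bound
    {Θ : Type*} [Fintype Θ] [Nonempty Θ] {X P : Type*}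
    (ℓ : P → X → ℝ)
    (Φ : (Θ → ℝ) → ℝ) (gradΦ gradConj : (Θ → ℝ) → Θ → ℝ)
    (hconv : ConvexOn ℝ (probSimplex Θ) Φ)
    (hlsc : LowerSemicontinuousOn Φ (probSimplex Θ))
    (hdiff : ∀ μ ∈ probSimplexRI Θ,
      HasFDerivWithinAt Φ (toCLM (gradΦ μ)) (probSimplex Θ) μ)
    (hconjdiff : ∀ v : Θ → ℝ, HasFDerivAt (conjF Φ) (toCLM (gradConj v)) v)
    (hmem : ∀ v : Θ → ℝ, gradConj v ∈ probSimplexRI Θ)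
    (hinv₂ : ∀ v : Θ → ℝ, ∃ c : ℝ, gradΦ (gradConj v) = v + c • (1 : Θ → ℝ))
    (htrans : ∀ (v : Θ → ℝ) (α : ℝ), gradConj (v + α • (1 : Θ → ℝ)) = gradConj v)
    (hFY : ∀ μ ∈ probSimplexRI Θ, conjF Φ (gradΦ μ) = ip μ (gradΦ μ) - Φ μ)
    -- `Φ`-mixability of `ℓ`
    (hmix : ∀ p : Θ → P, ∀ μ ∈ probSimplexRI Θ, ∃ q : P, ∀ x : X,
      ℓ q x ≤ -conjF Φ (fun θ => -lamLoss Φ gradΦ μ θ - ℓ (p θ) x))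
    -- the game: prior, observations, expert predictions
    (π : Θ → ℝ) (hπ : π ∈ probSimplexRI Θ)
    (T : ℕ) (x : ℕ → X) (p : ℕ → Θ → P)
    -- the GAA mixture updates `μ^t = ∇Φ*(∇Φ(μ^{t−1}) − α^t)` with `α^t(θ) = ℓ_{x^t}(p^t_θ)`
    (μ : ℕ → Θ → ℝ) (h0 : μ 0 = π)
    (hrec : ∀ t < T, μ (t + 1) = gradConj (gradΦ (μ t) - fun θ => ℓ (p t θ) (x t)))
    -- the GAA predictions, satisfying the mixability inequality each round
    (q : ℕ → P)
    (hq : ∀ t < T,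
      ℓ (q t) (x t) ≤ -conjF Φ (fun θ => -lamLoss Φ gradΦ (μ t) θ - ℓ (p t θ) (x t))) :
    ∀ μ' ∈ probSimplex Θ,
      ∑ t ∈ Finset.range T, ℓ (q t) (x t)
        ≤ ip μ' (fun θ => ∑ t ∈ Finset.range T, ℓ (p t θ) (x t))
          + bregDiv Φ gradΦ μ' π :=
  generalised_aggregating_algorithm_strong_bound_general ℓ Φ gradΦ gradConj hlsc hinv₂ hFY π hπ T x
    p μ h0 hrec q hq
end
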